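/- Every monotone game G satisfies G ◁ G. -/
import Mathlib


inductive Game (A : Type) : Type 1 where
  | atom : A → Game A
  | comp : (ι κ : Type) → (ι → Game A) → (κ → Game A) → Nonempty ι → Nonempty κ → Game A

namespace Game

variable {A : Type}

/-- `G.IsAtom` holds iff `G` is an atomic game. -/
def IsAtom : Game A → Prop
  | atom _ => True
  | comp _ _ _ _ _ _ => False

/-- `G.IsLeftOption x`: `x` is a left option of `G`. -/
def IsLeftOption : Game A → Game A → Prop
  | atom _, _ => False
  | comp _ _ L _ _ _, x => ∃ i, L i = x

/-- `G.IsRightOption y`: `y` is a right option of `G`. -/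
def IsRightOption : Game A → Game A → Prop
  | atom _, _ => False
  | comp _ _ _ R _ _, x => ∃ j, R j = x

section Ord

variable [PartialOrder A]

mutual
  /-- The order relation `G ≤ H` on games over a poset. -/
  inductive Le : Game A → Game A → Prop
    | mk : ∀ {G H : Game A},
        (∀ x, G.IsLeftOption x → Tri x H) →
        (∀ y, H.IsRightOption y → Tri G y) →
        ((G.IsAtom ∨ H.IsAtom) → Tri G H) →
        Le G H
  /-- The relation `G ◁ H` on games over a poset. -/
  inductive Tri : Game A → Game A → Prop
    | ofRight : ∀ {G H y : Game A}, G.IsRightOption y → Le y H → Tri G H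
    | ofLeft : ∀ {G H x : Game A}, H.IsLeftOption x → Le G x → Tri G H
    | ofAtom : ∀ {a b : A}, a ≤ b → Tri (Game.atom a) (Game.atom b)
end

/-- Equivalence of games: `G ≤ H` and `H ≤ G`. -/
def Equiv (G H : Game A) : Prop := Le G H ∧ Le H G

/-- A game is monotone if all of its options are good, and recursively all
options are monotone. -/
inductive Monotone : Game A → Prop
  | mk : ∀ {G : Game A},
      (∀ x, G.IsLeftOption x → Le G x) →
      (∀ y, G.IsRightOption y → Le y G) →
      (∀ x, G.IsLeftOption x → Monotone x) →
      (∀ y, G.IsRightOption y → Monotone y) →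
      Monotone G

/-- A game is passable if `G ◁ G` and recursively all options are passable. -/
inductive Passable : Game A → Prop
  | mk : ∀ {G : Game A}, Tri G G →
      (∀ x, G.IsLeftOption x → Passable x) →
      (∀ y, G.IsRightOption y → Passable y) →
      Passable G

end Ord

end Game

/-- Every monotone game `G` satisfies `G ◁ G`. -/
theorem Game.monotone_tri_self {A : Type} [PartialOrder A]
    (G : Game A) (hG : G.Monotone) : Game.Tri G G := by
  cases hG with
  | @mk G hL hR _ _ =>
    cases G with
    | atom a => exact Game.Tri.ofAtom le_rfl
    | comp ι κ L R hι hκ =>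
      obtain ⟨j⟩ := hκ
      exact Game.Tri.ofRight ⟨j, rfl⟩ (hR (R j) ⟨j, rfl⟩)
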